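/- arXiv:1002.3070 — 5 statements merged into one kernel-verified Lean document; each statement's English description precedes it below -/
import Mathlib

section
/- For t ≠ 0 with |t| < e^{-e}, the second derivative of w̃(t) = t·sin(log log log(1/|t|)) satisfies |w̃''(t)| ≤ (1/(|t|·(log log(1/|t|))·(log(1/|t|)))) · (1 + (2 + log log(1/|t|)) / ((log log(1/|t|))·(log(1/|t|)))). -/
/-!
As `log (1 / |x|) = -log x` for every real `x`, `wtil x = x * sin (log (log (-log x)))` on all
of `ℝ`, so both signs of `t` are handled at once. Writing `a = -log x`, `b = log a`,
`c = log b` and `P = a * b`, one has `c' = -1 / (x P)` and `P' = -(b + 1) / x`, hence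
`wtil' = sin c - cos c / P` and `wtil'' = -cos c / (x P) - (sin c + (b + 1) cos c) / (x P²)`;
bounding `|sin c|, |cos c| ≤ 1` gives the estimate.
-/

noncomputable def wtil (t : ℝ) : ℝ :=
  t * Real.sin (Real.log (Real.log (Real.log (1 / |t|))))

open Real Filter Topology

section

variable {x : ℝ}

theorem wtil_eq_fun : wtil = fun x => x * sin (log (log (-log x))) := by
  funext x
  rw [wtil, one_div, log_inv, log_abs]

theorem hasDerivAt_log_log_neg_log (hx : x ≠ 0) (ha : -log x ≠ 0) (hb : log (-log x) ≠ 0) :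
    HasDerivAt (fun y => log (log (-log y))) (-(x * (-log x * log (-log x)))⁻¹) x := by
  refine (((hasDerivAt_log hx).fun_neg.log ha).log hb).congr_deriv ?_
  field_simp

theorem hasDerivAt_neg_log_mul_log_neg_log (hx : x ≠ 0) (ha : -log x ≠ 0) :
    HasDerivAt (fun y => -log y * log (-log y)) (-(log (-log x) + 1) / x) x := by
  refine ((hasDerivAt_log hx).fun_neg.fun_mul ((hasDerivAt_log hx).fun_neg.log ha)).congr_deriv ?_
  field_simp [neg_ne_zero.mp ha]
  ring

theorem hasDerivAt_wtil (hx : x ≠ 0) (ha : -log x ≠ 0) (hb : log (-log x) ≠ 0) :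
    HasDerivAt wtil
      (sin (log (log (-log x))) - cos (log (log (-log x))) / (-log x * log (-log x))) x := by
  rw [wtil_eq_fun]
  refine ((hasDerivAt_id' x).fun_mul (hasDerivAt_log_log_neg_log hx ha hb).sin).congr_deriv ?_
  field_simp
  ring

theorem deriv_wtil_eventuallyEq (hx : x ≠ 0) (ha : -log x ≠ 0) (hb : log (-log x) ≠ 0) :
    deriv wtil =ᶠ[𝓝 x] fun y =>
      sin (log (log (-log y))) - cos (log (log (-log y))) / (-log y * log (-log y)) := by
  have hlog : ContinuousAt (fun y => -log y) x := (continuousAt_log hx).neg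
  filter_upwards [eventually_ne_nhds hx, hlog.eventually_ne ha,
    (hlog.log ha).eventually_ne hb] with y hy hay hby
  exact (hasDerivAt_wtil hy hay hby).deriv

theorem hasDerivAt_deriv_wtil (hx : x ≠ 0) (ha : -log x ≠ 0) (hb : log (-log x) ≠ 0) :
    HasDerivAt (deriv wtil)
      (-cos (log (log (-log x))) / (x * (-log x * log (-log x)))
        - (sin (log (log (-log x))) + (log (-log x) + 1) * cos (log (log (-log x))))
          / (x * (-log x * log (-log x)) ^ 2)) x := by
  have hc := hasDerivAt_log_log_neg_log hx ha hb
  have hP := hasDerivAt_neg_log_mul_log_neg_log hx ha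
  refine HasDerivAt.congr_of_eventuallyEq ?_ (deriv_wtil_eventuallyEq hx ha hb)
  refine (hc.sin.fun_sub (hc.cos.fun_div hP (mul_ne_zero ha hb))).congr_deriv ?_
  field_simp [neg_ne_zero.mp ha]
  ring

end

theorem abs_neg_cos_div_sub_sin_add_mul_cos_div_le (x b c P : ℝ) (hx : x ≠ 0) (hb : 0 ≤ b + 1)
    (hP : 0 < P) :
    |-cos c / (x * P) - (sin c + (b + 1) * cos c) / (x * P ^ 2)|
      ≤ 1 / (|x| * P) * (1 + (2 + b) / P) := by
  have hnum : |cos c * P + (sin c + (b + 1) * cos c)| ≤ P + (2 + b) := by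
    have := abs_cos_le_one c
    have := abs_sin_le_one c
    calc |cos c * P + (sin c + (b + 1) * cos c)|
        ≤ |cos c| * P + (|sin c| + (b + 1) * |cos c|) := by
          refine (abs_add_le _ _).trans (add_le_add ?_ ((abs_add_le _ _).trans ?_)) <;>
            simp only [abs_mul, abs_of_pos hP, abs_of_nonneg hb, le_refl]
      _ ≤ P + (2 + b) := by nlinarith
  calc |-cos c / (x * P) - (sin c + (b + 1) * cos c) / (x * P ^ 2)|
      = |cos c * P + (sin c + (b + 1) * cos c)| / (|x| * P ^ 2) := by
        have : -cos c / (x * P) - (sin c + (b + 1) * cos c) / (x * P ^ 2)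
            = -(cos c * P + (sin c + (b + 1) * cos c)) / (x * P ^ 2) := by
          field_simp
          ring
        rw [this, abs_div, abs_neg, abs_mul, abs_of_pos (pow_pos hP 2)]
    _ ≤ (P + (2 + b)) / (|x| * P ^ 2) := by gcongr
    _ = 1 / (|x| * P) * (1 + (2 + b) / P) := by
        field_simp

/-- For t ≠ 0 with |t| < e^{-e}, the second derivative of w̃ satisfies
|w̃''(t)| ≤ (1/(|t|·(log log(1/|t|))·(log(1/|t|)))) ·
  (1 + (2 + log log(1/|t|)) / ((log log(1/|t|))·(log(1/|t|)))). -/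
theorem stmt2 (t : ℝ) (ht : t ≠ 0) (ht' : |t| < Real.exp (-Real.exp 1)) :
    |deriv (deriv wtil) t| ≤
      (1 / (|t| * Real.log (Real.log (1 / |t|)) * Real.log (1 / |t|))) *
        (1 + (2 + Real.log (Real.log (1 / |t|))) /
          (Real.log (Real.log (1 / |t|)) * Real.log (1 / |t|))) := by
  have hlog : log (1 / |t|) = -log t := by rw [one_div, log_inv, log_abs]
  have ha : exp 1 < -log t := by
    have := log_lt_log (abs_pos.mpr ht) ht'
    rwa [log_exp, log_abs, lt_neg] at this
  have hb : 1 < log (-log t) := by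
    simpa only [log_exp] using log_lt_log (exp_pos 1) ha
  have hP : 0 < -log t * log (-log t) := mul_pos ((exp_pos 1).trans ha) (one_pos.trans hb)
  rw [(hasDerivAt_deriv_wtil ht (left_ne_zero_of_mul hP.ne') (one_pos.trans hb).ne').deriv, hlog,
    mul_assoc, mul_comm (log (-log t)) (-log t)]
  exact abs_neg_cos_div_sub_sin_add_mul_cos_div_le _ _ _ _ ht (by linarith) hP
end

section
/- The function t ↦ |t|·|w̃''(t)| tends to 0 as t → 0 (t ≠ 0), where w̃(t) = t·sin(log log log(1/|t|)). -/
open Real Filter Topology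

theorem hasDerivAt_mul_comp_neg_log {h h' : ℝ → ℝ} {c t : ℝ}
    (hh : ∀ x, c < x → HasDerivAt h (h' x) x) (ht : t ≠ 0) (hc : c < -log t) :
    HasDerivAt (fun s => s * h (-log s)) (h (-log t) - h' (-log t)) t := by
  refine ((hasDerivAt_id' t).mul ((hh _ hc).comp t (hasDerivAt_log ht).neg)).congr_deriv ?_
  simp only [Function.comp_apply, Pi.neg_apply]
  field_simp
  ring

theorem mul_deriv_deriv_mul_comp_neg_log {h h' h'' : ℝ → ℝ} {c t : ℝ}
    (hh : ∀ x, c < x → HasDerivAt h (h' x) x) (hh' : ∀ x, c < x → HasDerivAt h' (h'' x) x)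
    (ht : t ≠ 0) (hc : c < -log t) :
    t * deriv (deriv fun s => s * h (-log s)) t = h'' (-log t) - h' (-log t) := by
  have hderiv : deriv (fun s => s * h (-log s)) =ᶠ[𝓝 t] fun s => h (-log s) - h' (-log s) := by
    filter_upwards [eventually_ne_nhds ht,
      (continuousAt_log ht).neg.eventually (lt_mem_nhds hc)] with s hs hcs
    exact (hasDerivAt_mul_comp_neg_log hh hs hcs).deriv
  have hlog := (hasDerivAt_log ht).neg
  have h2 : HasDerivAt (fun s => h (-log s) - h' (-log s)) _ t :=
    ((hh _ hc).comp t hlog).sub ((hh' _ hc).comp t hlog)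
  rw [hderiv.deriv_eq, h2.deriv]
  field_simp
  ring

theorem hasDerivAt_inv_div_log {x : ℝ} (hx : 1 < x) :
    HasDerivAt (fun y => y⁻¹ / log y) (-(x⁻¹ / log x * (x⁻¹ + x⁻¹ / log x))) x := by
  have hx0 : x ≠ 0 := by positivity
  have hlog : log x ≠ 0 := (log_pos hx).ne'
  refine ((hasDerivAt_inv hx0).div (hasDerivAt_log hx0) hlog).congr_deriv ?_
  field_simp
  ring

theorem hasDerivAt_sin_log_log {x : ℝ} (hx : 1 < x) :
    HasDerivAt (fun y => sin (log (log y))) (x⁻¹ / log x * cos (log (log x))) x := by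
  have hx0 : x ≠ 0 := by positivity
  refine ((hasDerivAt_log_log hx0 (by linarith) (by linarith)).sin).congr_deriv ?_
  ring

theorem hasDerivAt_deriv_sin_log_log {x : ℝ} (hx : 1 < x) :
    HasDerivAt (fun y => y⁻¹ / log y * cos (log (log y)))
      (-((x⁻¹ / log x) ^ 2 * sin (log (log x)) +
        x⁻¹ / log x * (x⁻¹ + x⁻¹ / log x) * cos (log (log x)))) x := by
  have hx0 : x ≠ 0 := by positivity
  refine ((hasDerivAt_inv_div_log hx).mul
    (hasDerivAt_log_log hx0 (by linarith) (by linarith)).cos).congr_deriv ?_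
  ring

theorem tendsto_inv_div_log_atTop : Tendsto (fun x : ℝ => x⁻¹ / log x) atTop (𝓝 0) := by
  simpa [div_eq_mul_inv] using
    tendsto_inv_atTop_zero.mul (tendsto_inv_atTop_zero.comp tendsto_log_atTop)

theorem tendsto_deriv_sin_log_log_atTop :
    Tendsto (fun x : ℝ => x⁻¹ / log x * cos (log (log x))) atTop (𝓝 0) :=
  tendsto_inv_div_log_atTop.zero_mul_isBoundedUnder_le
    (isBoundedUnder_of ⟨1, fun _ => abs_cos_le_one _⟩)

theorem tendsto_deriv_deriv_sin_log_log_atTop :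
    Tendsto (fun x : ℝ => -((x⁻¹ / log x) ^ 2 * sin (log (log x)) +
        x⁻¹ / log x * (x⁻¹ + x⁻¹ / log x) * cos (log (log x)))) atTop (𝓝 0) := by
  have hg := tendsto_inv_div_log_atTop
  have hsq : Tendsto (fun x : ℝ => (x⁻¹ / log x) ^ 2) atTop (𝓝 0) := by
    simpa using hg.pow 2
  have hprod :
      Tendsto (fun x : ℝ => x⁻¹ / log x * (x⁻¹ + x⁻¹ / log x)) atTop (𝓝 0) := by
    simpa using hg.mul (tendsto_inv_atTop_zero.add hg)
  have hsin := hsq.zero_mul_isBoundedUnder_le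
    (isBoundedUnder_of ⟨1, fun x => abs_sin_le_one (log (log x))⟩)
  have hcos := hprod.zero_mul_isBoundedUnder_le
    (isBoundedUnder_of ⟨1, fun x => abs_cos_le_one (log (log x))⟩)
  simpa using (hsin.add hcos).neg

theorem wtil_eq : wtil = fun t => t * sin (log (log (-log t))) := by
  funext t
  simp [wtil, one_div, log_inv, log_abs]

/-- The function t ↦ |t|·|w̃''(t)| tends to 0 as t → 0 through nonzero values. -/
theorem stmt3 :
    Filter.Tendsto (fun t : ℝ => |t| * |deriv (deriv wtil) t|)
      (nhdsWithin 0 {(0 : ℝ)}ᶜ) (nhds 0) := by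
  have hlog : Tendsto (fun t => -log t) (𝓝[≠] 0) atTop :=
    tendsto_neg_atBot_atTop.comp tendsto_log_nhdsNE_zero
  have hlim := (tendsto_deriv_deriv_sin_log_log_atTop.sub
    tendsto_deriv_sin_log_log_atTop).comp hlog |>.abs
  rw [sub_zero, abs_zero] at hlim
  refine hlim.congr' ?_
  filter_upwards [hlog.eventually_gt_atTop 1, self_mem_nhdsWithin] with t hc ht
  rw [← abs_mul, wtil_eq, mul_deriv_deriv_mul_comp_neg_log
    (fun _ => hasDerivAt_sin_log_log) (fun _ => hasDerivAt_deriv_sin_log_log) ht hc]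
  rfl
end

section
/- Let ψ¹(t) = 402/(|t|·log log(1/(5|t|))) for t ≠ 0. Let 0 < b ≤ T with T = e^{-e}/2 and suppose v : [0, b/5] → ℝ satisfies |v(t)| ≥ 5t for all t ∈ [0, b/5]. Then ∫_0^{b/5} min(5t·ψ¹(t), ψ¹(t)·|v(t)|) dt ≥ 201·b / (log log(1/b)). -/
/-! On `[0, b/5]` the minimum is `5t·ψ¹(t) = 2010 / log log (1/(5t))`, and the substitution
`x = 5t` turns the integral into `402 ∫₀ᵇ dx / log log (1/x)`. The function
`x ↦ x · log log (1/x)` is increasing on `(0, e^{-e}]` (its derivative `log log (1/x) + 1/log x`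
is at least `1 - 1/e`), so `1 / log log (1/x)` lies above its chord from the origin to `x = b`,
whose integral is `b / (2 log log (1/b))`. -/

noncomputable def psi1 (t : ℝ) : ℝ :=
  402 / (|t| * Real.log (Real.log (1 / (5 * |t|))))

open Real Set MeasureTheory

lemma one_le_log_log_inv {x : ℝ} (hx : 0 < x) (hxe : x ≤ exp (-exp 1)) :
    1 ≤ log (log (1 / x)) := by
  have hlog : exp 1 ≤ log (1 / x) := by
    rw [one_div, log_inv, le_neg, ← log_exp (-exp 1)]
    exact log_le_log hx hxe
  simpa using log_le_log (exp_pos 1) hlog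

lemma monotoneOn_mul_log_log_inv :
    MonotoneOn (fun x ↦ x * log (log (1 / x))) (Ioc 0 (exp (-exp 1))) := by
  simp only [one_div, log_inv]
  have hderiv : ∀ x ∈ Ioc 0 (exp (-exp 1)),
      HasDerivAt (fun x ↦ x * log (-log x)) (log (-log x) + 1 / log x) x := by
    rintro x ⟨hx, hxe⟩
    have hlog : log x ≤ -exp 1 := by simpa using log_le_log hx hxe
    have hlog_ne : log x ≠ 0 := by linarith [exp_pos 1]
    refine ((hasDerivAt_id x).mul
      ((hasDerivAt_log hx.ne').neg.log (neg_ne_zero.2 hlog_ne))).congr_deriv ?_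
    simp only [Pi.neg_apply, id, one_mul, neg_div_neg_eq]
    field_simp
  refine monotoneOn_of_hasDerivWithinAt_nonneg (convex_Ioc _ _)
    (fun x hx ↦ (hderiv x hx).continuousAt.continuousWithinAt)
    (fun x hx ↦ (hderiv x (interior_subset hx)).hasDerivWithinAt) ?_
  rintro x hx
  obtain ⟨hx, hxe⟩ := interior_subset hx
  have hlog : log x ≤ -exp 1 := by simpa using log_le_log hx hxe
  have hlog_log : 1 ≤ log (-log x) := by simpa [log_inv] using one_le_log_log_inv hx hxe
  have hinv : -1 ≤ 1 / log x := by
    rw [le_div_iff_of_neg (by linarith [exp_pos 1])]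
    linarith [add_one_le_exp 1]
  linarith

lemma div_mul_log_log_inv_le {x y : ℝ} (hx : 0 < x) (hxy : x ≤ y) (hye : y ≤ exp (-exp 1)) :
    x / (y * log (log (1 / y))) ≤ 1 / log (log (1 / x)) := by
  have hLx := one_le_log_log_inv hx (hxy.trans hye)
  have hLy := one_le_log_log_inv (hx.trans_le hxy) hye
  rw [div_le_div_iff₀ (mul_pos (hx.trans_le hxy) (by linarith)) (by linarith), one_mul]
  exact monotoneOn_mul_log_log_inv ⟨hx, hxy.trans hye⟩ ⟨hx.trans_le hxy, hye⟩ hxy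

lemma intervalIntegrable_one_div_log_log_inv {a : ℝ} (ha : 0 ≤ a) (hae : a ≤ exp (-exp 1)) :
    IntervalIntegrable (fun x ↦ 1 / log (log (1 / x))) volume 0 a := by
  rw [intervalIntegrable_iff_integrableOn_Ioc_of_le ha]
  refine IntegrableOn.of_bound measure_Ioc_lt_top
    (by fun_prop : Measurable _).aestronglyMeasurable 1 ?_
  filter_upwards [ae_restrict_mem measurableSet_Ioc] with x ⟨hx, hxa⟩
  have hL := one_le_log_log_inv hx (hxa.trans hae)
  rw [norm_eq_abs, abs_of_nonneg (by positivity)]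
  exact div_le_one_of_le₀ hL (by positivity)

theorem div_two_mul_log_log_inv_le_integral {a : ℝ} (ha : 0 < a) (hae : a ≤ exp (-exp 1)) :
    a / (2 * log (log (1 / a))) ≤ ∫ x in (0 : ℝ)..a, 1 / log (log (1 / x)) := by
  have hLa := one_le_log_log_inv ha hae
  calc a / (2 * log (log (1 / a))) = ∫ x in (0 : ℝ)..a, x / (a * log (log (1 / a))) := by
        rw [intervalIntegral.integral_div, integral_id]
        field_simp
        ring
    _ ≤ _ := intervalIntegral.integral_mono_on_of_le_Ioo ha.le
        ((continuous_id.div_const _).intervalIntegrable _ _)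
        (intervalIntegrable_one_div_log_log_inv ha.le hae)
        fun x hx ↦ div_mul_log_log_inv_le hx.1 hx.2.le hae

lemma five_mul_mul_psi1 {t : ℝ} (ht : 0 ≤ t) :
    5 * t * psi1 t = 2010 / log (log (1 / (5 * t))) := by
  rcases ht.eq_or_lt with rfl | ht
  · simp [psi1]
  rw [psi1, abs_of_pos ht, mul_div_assoc', ← mul_div_mul_left 2010 _ ht.ne']
  ring_nf

lemma psi1_nonneg {t : ℝ} (hte : 5 * |t| ≤ exp (-exp 1)) : 0 ≤ psi1 t := by
  rcases (abs_nonneg t).eq_or_lt with h | h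
  · simp [psi1, ← h]
  have hL := one_le_log_log_inv (by positivity) hte
  unfold psi1
  positivity

lemma min_five_mul_mul_psi1 {t a : ℝ} (ht : 0 ≤ t) (hte : 5 * t ≤ exp (-exp 1))
    (ha : 5 * t ≤ a) :
    min (5 * t * psi1 t) (psi1 t * a) = 2010 / log (log (1 / (5 * t))) := by
  have hpsi : 0 ≤ psi1 t := psi1_nonneg (by rwa [abs_of_nonneg ht])
  rw [min_eq_left (by nlinarith), five_mul_mul_psi1 ht]

/-- If 0 < b ≤ T = e^{-e}/2 and |v(t)| ≥ 5t on [0, b/5], then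
∫_0^{b/5} min(5t·ψ¹(t), ψ¹(t)·|v(t)|) dt ≥ 201·b/(log log(1/b)). -/
theorem stmt11 (b : ℝ) (hb : 0 < b) (hbT : b ≤ Real.exp (-Real.exp 1) / 2)
    (v : ℝ → ℝ) (hv : ∀ t ∈ Set.Icc (0 : ℝ) (b / 5), 5 * t ≤ |v t|) :
    201 * b / Real.log (Real.log (1 / b)) ≤
      ∫ t in (0 : ℝ)..(b / 5), min (5 * t * psi1 t) (psi1 t * |v t|) := by
  have hbe : b ≤ exp (-exp 1) := hbT.trans (half_le_self (exp_pos _).le)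
  have hintegrand : EqOn (fun t ↦ min (5 * t * psi1 t) (psi1 t * |v t|))
      (fun t ↦ 2010 * (1 / log (log (1 / (5 * t))))) (uIcc 0 (b / 5)) := by
    intro t ht
    rw [uIcc_of_le (by positivity)] at ht
    dsimp only
    rw [min_five_mul_mul_psi1 ht.1 (by linarith [ht.2]) (hv t ht), mul_one_div]
  rw [intervalIntegral.integral_congr hintegrand, intervalIntegral.integral_const_mul,
    intervalIntegral.integral_comp_mul_left (fun x ↦ 1 / log (log (1 / x))) (c := 5)
      (by norm_num)]
  have h5 : (5 : ℝ) * (b / 5) = b := by ring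
  rw [smul_eq_mul, mul_zero, h5]
  calc 201 * b / log (log (1 / b)) = 2010 * (5⁻¹ * (b / (2 * log (log (1 / b))))) := by ring
    _ ≤ _ := by gcongr; exact div_two_mul_log_log_inv_le_integral hb hbe
end

section
/- Let d ∈ (0, e^{-e}) and let l̃' = sin(log log log(1/d)). Then for all t ∈ (0, d), |l̃' − w̃'(t)| ≤ d / (t·(log log(1/d))·(log(1/d))), where w̃'(t) = sin(log log log(1/t)) − cos(log log log(1/t))/((log log(1/t))(log(1/t))). -/
/-!
With `f s = sin (log (log (log (1 / s))))` we have `w̃ s = s * f s`, the chord slope is `f d` and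
`w̃' t = f t + t * f' t`. On `[t, d]`, `|f' s| ≤ 1 / (s * log (log (1 / s)) * log (1 / s))`, which is
at most `C = 1 / (t * log (log (1 / d)) * log (1 / d))` because `s ↦ log (log (1 / s)) * log (1 / s)`
decreases. The mean value theorem then gives `|f d - f t| + t * |f' t| ≤ (d - t) * C + t * C = d * C`.
-/

open Real Set

lemma exp_one_lt_log_one_div {s : ℝ} (hs : 0 < s) (hse : s < exp (-exp 1)) :
    exp 1 < log (1 / s) := by
  rw [one_div, log_inv, lt_neg]
  simpa using log_lt_log hs hse

lemma one_lt_log_log_one_div {s : ℝ} (hs : 0 < s) (hse : s < exp (-exp 1)) :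
    1 < log (log (1 / s)) := by
  simpa using log_lt_log (exp_pos 1) (exp_one_lt_log_one_div hs hse)

lemma antitoneOn_log_log_one_div_mul_log_one_div :
    AntitoneOn (fun s => log (log (1 / s)) * log (1 / s)) (Ioc 0 (exp (-1))) := by
  intro s ⟨hs, _⟩ u ⟨hu, hue⟩ hsu
  have hu1 : 1 ≤ log (1 / u) := by
    rw [one_div, log_inv, le_neg]
    simpa using log_le_log hu hue
  have hlog : log (1 / u) ≤ log (1 / s) :=
    log_le_log (by positivity) (one_div_le_one_div_of_le hs hsu)
  exact mul_le_mul (log_le_log (by linarith) hlog) hlog (by linarith)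
    (log_nonneg (hu1.trans hlog))

lemma hasDerivAt_log_one_div {s : ℝ} (hs : s ≠ 0) :
    HasDerivAt (fun s => log (1 / s)) (-s⁻¹) s := by
  simp only [one_div, log_inv]
  exact (hasDerivAt_log hs).neg

lemma hasDerivAt_sin_log_log_log_one_div {s : ℝ} (h₁ : log (1 / s) ≠ 0)
    (h₂ : log (log (1 / s)) ≠ 0) :
    HasDerivAt (fun s => sin (log (log (log (1 / s)))))
      (-cos (log (log (log (1 / s)))) / (s * log (log (1 / s)) * log (1 / s))) s := by
  have hs : s ≠ 0 := by rintro rfl; simp at h₁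
  convert (((hasDerivAt_log_one_div hs).log h₁).log h₂).sin using 1
  field_simp

lemma abs_sub_add_mul_deriv_le {f f' : ℝ → ℝ} {t d C : ℝ} (ht : 0 ≤ t) (htd : t ≤ d)
    (hf : ∀ s ∈ Icc t d, HasDerivAt f (f' s) s) (hC : ∀ s ∈ Icc t d, |f' s| ≤ C) :
    |f d - (f t + t * f' t)| ≤ d * C := by
  have hmvt : |f d - f t| ≤ C * (d - t) := by
    simpa [abs_of_nonneg (sub_nonneg.2 htd)] using
      (convex_Icc t d).norm_image_sub_le_of_norm_hasDerivWithin_le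
        (fun s hs => (hf s hs).hasDerivWithinAt) hC (left_mem_Icc.2 htd) (right_mem_Icc.2 htd)
  have hft : |t * f' t| ≤ t * C := by
    rw [abs_mul, abs_of_nonneg ht]
    exact mul_le_mul_of_nonneg_left (hC t (left_mem_Icc.2 htd)) ht
  calc |f d - (f t + t * f' t)| = |f d - f t - t * f' t| := by rw [sub_add_eq_sub_sub]
    _ ≤ |f d - f t| + |t * f' t| := abs_sub _ _
    _ ≤ C * (d - t) + t * C := add_le_add hmvt hft
    _ = d * C := by ring

lemma abs_neg_cos_log_log_log_div_le {s t d : ℝ} (ht : 0 < t) (hts : t ≤ s) (hsd : s ≤ d)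
    (hd : d < exp (-exp 1)) :
    |-cos (log (log (log (1 / s)))) / (s * log (log (1 / s)) * log (1 / s))| ≤
      1 / (t * log (log (1 / d)) * log (1 / d)) := by
  have hs : 0 < s := ht.trans_le hts
  have hd0 : 0 < d := hs.trans_le hsd
  have hexp : exp (-exp 1) ≤ exp (-1) := exp_le_exp.2 (by linarith [add_one_le_exp 1])
  have hmono := antitoneOn_log_log_one_div_mul_log_one_div
    ⟨hs, (hsd.trans_lt hd).le.trans hexp⟩ ⟨hd0, hd.le.trans hexp⟩ hsd
  have hd₁ := (exp_pos 1).trans (exp_one_lt_log_one_div hd0 hd)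
  have hd₂ := one_pos.trans (one_lt_log_log_one_div hd0 hd)
  have hpos : 0 < t * log (log (1 / d)) * log (1 / d) := by positivity
  have hden : t * log (log (1 / d)) * log (1 / d) ≤ s * log (log (1 / s)) * log (1 / s) := by
    simp only [mul_assoc] at hmono ⊢
    exact mul_le_mul hts hmono (by positivity) hs.le
  rw [abs_div, abs_neg, abs_of_pos (hpos.trans_le hden)]
  exact div_le_div₀ zero_le_one (abs_cos_le_one _) hpos hden

theorem stmt12_general (d t : ℝ) (hd : d < Real.exp (-Real.exp 1))
    (ht : t ∈ Set.Ioo (0 : ℝ) d) :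
    |Real.sin (Real.log (Real.log (Real.log (1 / d)))) -
        (Real.sin (Real.log (Real.log (Real.log (1 / t)))) -
          Real.cos (Real.log (Real.log (Real.log (1 / t)))) /
            (Real.log (Real.log (1 / t)) * Real.log (1 / t)))| ≤
      d / (t * Real.log (Real.log (1 / d)) * Real.log (1 / d)) := by
  obtain ⟨ht0, htd⟩ := ht
  have hderiv : ∀ s ∈ Icc t d, HasDerivAt (fun s => sin (log (log (log (1 / s)))))
      (-cos (log (log (log (1 / s)))) / (s * log (log (1 / s)) * log (1 / s))) s := by
    intro s ⟨hts, hsd⟩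
    have hs : 0 < s := ht0.trans_le hts
    have hse : s < exp (-exp 1) := hsd.trans_lt hd
    exact hasDerivAt_sin_log_log_log_one_div
      ((exp_pos 1).trans (exp_one_lt_log_one_div hs hse)).ne'
      (one_pos.trans (one_lt_log_log_one_div hs hse)).ne'
  convert abs_sub_add_mul_deriv_le ht0.le htd.le hderiv
    (fun s hs => abs_neg_cos_log_log_log_div_le ht0 hs.1 hs.2 hd) using 3
  · field_simp
    ring
  · ring

/-- Let d ∈ (0, e^{-e}) and l̃' = sin(log log log(1/d)). Then for all t ∈ (0, d),
|l̃' − w̃'(t)| ≤ d / (t·(log log(1/d))·(log(1/d))). -/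
theorem stmt12 (d t : ℝ) (hd0 : 0 < d) (hd : d < Real.exp (-Real.exp 1))
    (ht : t ∈ Set.Ioo (0 : ℝ) d) :
    |Real.sin (Real.log (Real.log (Real.log (1 / d)))) -
        (Real.sin (Real.log (Real.log (Real.log (1 / t)))) -
          Real.cos (Real.log (Real.log (Real.log (1 / t)))) /
            (Real.log (Real.log (1 / t)) * Real.log (1 / t)))| ≤
      d / (t * Real.log (Real.log (1 / d)) * Real.log (1 / d)) :=
  stmt12_general d t hd ht
end

section
/- Let d ∈ (0, e^{-e}/2), let w̃(t) = t·sin(log log log(1/|t|)), and let l̃ be the affine function agreeing with w̃ at ±d, so l̃'(t) = sin(log log log(1/d)). Then ∫_{−d}^{d} |(l̃')² − (w̃'(t))²| dt ≤ 40d / (log log(1/d)). -/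
/-- The derivative of w̃(t) = t·sin(log log log(1/|t|)) away from 0. -/
noncomputable def wtil' (t : ℝ) : ℝ :=
  Real.sin (Real.log (Real.log (Real.log (1 / |t|)))) -
    Real.cos (Real.log (Real.log (Real.log (1 / |t|)))) /
      (Real.log (Real.log (1 / |t|)) * Real.log (1 / |t|))

/-! On `d / log (1/d) ≤ |t| ≤ d` the variable `u = log (1/|t|)` stays in `[E, E + log E]`
with `E = log (1/d)`, so `log log u` moves by at most `1 / E` and `w̃'(t)` is within
`2 / log E` of the chord slope `sin (log log E)`. On the inner interval `|t| ≤ d / E` only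
`|w̃'| ≤ 2` is used: that interval is already short enough. -/

open Real MeasureTheory Set

lemma log_sub_log_le_div {x y : ℝ} (hx : 0 < x) (hy : 0 < y) :
    log y - log x ≤ (y - x) / x := by
  rw [← log_div hy.ne' hx.ne']
  calc log (y / x) ≤ y / x - 1 := log_le_sub_one_of_pos (by positivity)
    _ = (y - x) / x := by field_simp

lemma exp_one_le_log_one_div {x : ℝ} (hx : 0 < x) (hxe : x ≤ exp (-exp 1)) :
    exp 1 ≤ log (1 / x) := by
  rw [one_div, log_inv, le_neg]
  calc log x ≤ log (exp (-exp 1)) := log_le_log hx hxe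
    _ = -exp 1 := log_exp _

lemma one_le_log_of_exp_one_le {u : ℝ} (hu : exp 1 ≤ u) : 1 ≤ log u :=
  (le_log_iff_exp_le (lt_of_lt_of_le (exp_pos 1) hu)).2 hu

noncomputable def wtilLog (u : ℝ) : ℝ :=
  sin (log (log u)) - cos (log (log u)) / (log u * u)

lemma wtil'_eq_wtilLog (t : ℝ) : wtil' t = wtilLog (log (1 / |t|)) := rfl

lemma abs_wtilLog_le_two {u : ℝ} (hu : exp 1 ≤ u) : |wtilLog u| ≤ 2 := by
  have hu1 : 1 ≤ u := (one_le_exp zero_le_one).trans hu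
  have hden : 1 ≤ log u * u := one_le_mul_of_one_le_of_one_le (one_le_log_of_exp_one_le hu) hu1
  have hcos : |cos (log (log u)) / (log u * u)| ≤ 1 := by
    rw [abs_div, abs_of_pos (show 0 < log u * u by linarith), div_le_one (by linarith)]
    exact (abs_cos_le_one _).trans hden
  calc |wtilLog u| ≤ |sin (log (log u))| + |cos (log (log u)) / (log u * u)| := abs_sub _ _
    _ ≤ 1 + 1 := add_le_add (abs_sin_le_one _) hcos
    _ = 2 := by norm_num

lemma abs_wtil'_le_two {t : ℝ} (ht : |t| ≤ exp (-exp 1)) : |wtil' t| ≤ 2 := by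
  rcases eq_or_ne t 0 with rfl | ht0
  · simp [wtil']
  · rw [wtil'_eq_wtilLog]
    exact abs_wtilLog_le_two (exp_one_le_log_one_div (abs_pos.2 ht0) ht)

lemma abs_sin_sub_wtilLog_le {E u : ℝ} (hE : exp 1 ≤ E) (hEu : E ≤ u)
    (huE : u ≤ E + log E) :
    |sin (log (log E)) - wtilLog u| ≤ 2 / log E := by
  have hE1 : 1 ≤ E := (one_le_exp zero_le_one).trans hE
  have hlogE : 1 ≤ log E := one_le_log_of_exp_one_le hE
  have hlogE_le : log E ≤ E := log_le_self (by linarith)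
  have hlog_mono : log E ≤ log u := log_le_log (by linarith) hEu
  have hlog_sub : log u - log E ≤ log E / E :=
    (log_sub_log_le_div (by linarith) (by linarith)).trans (by gcongr; linarith)
  have hloglog_sub : log (log u) - log (log E) ≤ 1 / log E := by
    calc log (log u) - log (log E) ≤ (log u - log E) / log E :=
          log_sub_log_le_div (by linarith) (by linarith)
      _ ≤ log E / E / log E := by gcongr
      _ = 1 / E := by field_simp
      _ ≤ 1 / log E := by gcongr
  have hsin : |sin (log (log E)) - sin (log (log u))| ≤ 1 / log E := by
    refine (abs_sin_sub_sin_le _ _).trans ?_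
    rw [abs_sub_comm, abs_of_nonneg (by linarith [log_le_log (by linarith) hlog_mono])]
    exact hloglog_sub
  have hcos : |cos (log (log u)) / (log u * u)| ≤ 1 / log E := by
    rw [abs_div, abs_of_pos (show 0 < log u * u by nlinarith)]
    exact div_le_div₀ zero_le_one (abs_cos_le_one _) (by linarith) (by nlinarith)
  calc |sin (log (log E)) - wtilLog u|
      = |(sin (log (log E)) - sin (log (log u))) + cos (log (log u)) / (log u * u)| := by
        congr 1; unfold wtilLog; ring
    _ ≤ 1 / log E + 1 / log E := (abs_add_le _ _).trans (add_le_add hsin hcos)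
    _ = 2 / log E := by ring

lemma abs_sq_sub_sq_wtil'_le {d t : ℝ} (hd : 0 < d) (hde : d ≤ exp (-exp 1))
    (hc : d / log (1 / d) ≤ |t|) (htd : |t| ≤ d) :
    |sin (log (log (log (1 / d)))) ^ 2 - wtil' t ^ 2| ≤ 6 / log (log (1 / d)) := by
  have hE := exp_one_le_log_one_div hd hde
  set E := log (1 / d)
  have hE0 : 0 < E := lt_of_lt_of_le (exp_pos 1) hE
  have ht : 0 < |t| := lt_of_lt_of_le (by positivity) hc
  have hlower : E ≤ log (1 / |t|) := log_le_log (by positivity) (one_div_le_one_div_of_le ht htd)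
  have hupper : log (1 / |t|) ≤ E + log E := by
    calc log (1 / |t|) ≤ log (E / d) := log_le_log (by positivity) (by
          rw [div_le_div_iff₀ ht hd]; rw [div_le_iff₀ hE0] at hc; linarith)
      _ = E + log E := by
        rw [log_div hE0.ne' hd.ne']; simp only [E, one_div, log_inv]; ring
  have hdiff : |sin (log (log E)) - wtil' t| ≤ 2 / log E := by
    rw [wtil'_eq_wtilLog]
    exact abs_sin_sub_wtilLog_le hE hlower hupper
  have hsum : |sin (log (log E)) + wtil' t| ≤ 3 := by
    calc |sin (log (log E)) + wtil' t| ≤ 1 + 2 :=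
          (abs_add_le _ _).trans (add_le_add (abs_sin_le_one _) (abs_wtil'_le_two (htd.trans hde)))
      _ = 3 := by norm_num
  calc |sin (log (log E)) ^ 2 - wtil' t ^ 2|
      = |sin (log (log E)) + wtil' t| * |sin (log (log E)) - wtil' t| := by
        rw [sq_sub_sq, abs_mul]
    _ ≤ 3 * (2 / log E) := mul_le_mul hsum hdiff (abs_nonneg _) (by norm_num)
    _ = 6 / log E := by ring

lemma abs_sq_sub_sq_wtil'_le_four {a t : ℝ} (ha : |a| ≤ 1) (ht : |t| ≤ exp (-exp 1)) :
    |a ^ 2 - wtil' t ^ 2| ≤ 4 := by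
  have ha' := abs_le.1 ha
  have hw := abs_le.1 (abs_wtil'_le_two ht)
  exact abs_sub_le_of_nonneg_of_le (sq_nonneg _) ((sq_le_sq' ha'.1 ha'.2).trans (by norm_num))
    (sq_nonneg _) ((sq_le_sq' hw.1 hw.2).trans (by norm_num))

lemma intervalIntegrable_abs_sq_sub_sq_wtil' {a d : ℝ} (ha : |a| ≤ 1) (hd : 0 ≤ d)
    (hde : d ≤ exp (-exp 1)) :
    IntervalIntegrable (fun t => |a ^ 2 - wtil' t ^ 2|) volume (-d) d := by
  have hmeas : Measurable fun t => |a ^ 2 - wtil' t ^ 2| := by unfold wtil'; fun_prop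
  refine IntervalIntegrable.mono_fun' (g := fun _ => (4 : ℝ)) intervalIntegrable_const
    hmeas.aestronglyMeasurable (ae_restrict_of_forall_mem measurableSet_uIoc fun t ht => ?_)
  rw [uIoc_of_le (by linarith)] at ht
  simp only [Real.norm_eq_abs, abs_abs]
  exact abs_sq_sub_sq_wtil'_le_four ha ((abs_le.2 ⟨ht.1.le, ht.2⟩).trans hde)

lemma integral_le_mul_of_le_on {f : ℝ → ℝ} {a b C : ℝ} (hab : a ≤ b)
    (hf : IntervalIntegrable f volume a b) (h : ∀ x ∈ Icc a b, f x ≤ C) :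
    ∫ x in a..b, f x ≤ (b - a) * C := by
  simpa using intervalIntegral.integral_mono_on hab hf intervalIntegrable_const h

lemma integral_neg_le_of_le_inner_outer {f : ℝ → ℝ} {c d M ε : ℝ}
    (hf : IntervalIntegrable f volume (-d) d) (hc : 0 ≤ c) (hcd : c ≤ d)
    (hM : ∀ t, |t| ≤ c → f t ≤ M) (hε : ∀ t, c ≤ |t| → |t| ≤ d → f t ≤ ε) :
    ∫ t in (-d)..d, f t ≤ 2 * c * M + 2 * (d - c) * ε := by
  have hsub : ∀ {a b}, -d ≤ a → a ≤ b → b ≤ d → IntervalIntegrable f volume a b :=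
    fun ha hab hb =>
      hf.mono_set (by rw [uIcc_of_le hab, uIcc_of_le (by linarith)]; exact Icc_subset_Icc ha hb)
  have hleft : ∫ t in (-d)..(-c), f t ≤ (-c - -d) * ε :=
    integral_le_mul_of_le_on (by linarith) (hsub le_rfl (by linarith) (by linarith))
      fun t ht => hε t (by rw [abs_of_nonpos (by linarith [ht.2])]; linarith [ht.2])
        (by rw [abs_of_nonpos (by linarith [ht.2])]; linarith [ht.1])
  have hmid : ∫ t in (-c)..c, f t ≤ (c - -c) * M :=
    integral_le_mul_of_le_on (by linarith) (hsub (by linarith) (by linarith) hcd)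
      fun t ht => hM t (abs_le.2 ht)
  have hright : ∫ t in c..d, f t ≤ (d - c) * ε :=
    integral_le_mul_of_le_on hcd (hsub (by linarith) hcd le_rfl)
      fun t ht => hε t (by rw [abs_of_nonneg (by linarith [ht.1])]; exact ht.1)
        (by rw [abs_of_nonneg (by linarith [ht.1])]; exact ht.2)
  rw [← intervalIntegral.integral_add_adjacent_intervals (b := c)
      (hsub le_rfl (by linarith) hcd) (hsub (by linarith) hcd le_rfl),
    ← intervalIntegral.integral_add_adjacent_intervals (b := -c)
      (hsub le_rfl (by linarith) (by linarith)) (hsub (by linarith) (by linarith) hcd)]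
  linarith

/-- For 0 < d < e^{-e}/2, with l̃ the chord of w̃ between ±d (of slope
sin(log log log(1/d))), one has ∫_{−d}^{d} |(l̃')² − (w̃'(t))²| dt ≤ 40d/(log log(1/d)). -/
theorem stmt13 (d : ℝ) (hd0 : 0 < d) (hd : d < Real.exp (-Real.exp 1) / 2) :
    (∫ t in (-d)..d,
        |(Real.sin (Real.log (Real.log (Real.log (1 / d))))) ^ 2 - (wtil' t) ^ 2|) ≤
      40 * d / Real.log (Real.log (1 / d)) := by
  have hde : d ≤ exp (-exp 1) := by linarith [exp_pos (-exp 1)]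
  have hE := exp_one_le_log_one_div hd0 hde
  set E := log (1 / d)
  have hE0 : 0 < E := (exp_pos 1).trans_le hE
  have hlogE : 0 < log E := zero_lt_one.trans_le (one_le_log_of_exp_one_le hE)
  have hlogE_le : log E ≤ E := log_le_self hE0.le
  have hc : d / E ≤ d := div_le_self hd0.le ((one_le_exp zero_le_one).trans hE)
  calc _ ≤ 2 * (d / E) * 4 + 2 * (d - d / E) * (6 / log E) :=
        integral_neg_le_of_le_inner_outer
          (intervalIntegrable_abs_sq_sub_sq_wtil' (abs_sin_le_one _) hd0.le hde)
          (div_nonneg hd0.le hE0.le) hc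
          (fun t ht => abs_sq_sub_sq_wtil'_le_four (abs_sin_le_one _) ((ht.trans hc).trans hde))
          fun t h1 h2 => abs_sq_sub_sq_wtil'_le hd0 hde h1 h2
    _ ≤ 2 * (d / log E) * 4 + 2 * d * (6 / log E) := by
        gcongr
        exact sub_le_self d (div_nonneg hd0.le hE0.le)
    _ = 20 * d / log E := by ring
    _ ≤ 40 * d / log E := by gcongr; norm_num
end
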